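/- Let t_1, …, t_m ∈ H_0(K̃_b) be elements whose cosets modulo im(ψ_{b−1}) are linearly independent in H_0(K̃_b)/im(ψ_{b−1}), and suppose each t_i has persistence interval (b, d_i) in H_0(K̃_•) (with d_i ∈ {b+1,…,n} ∪ {∞}). Then there exist s_1, …, s_m ∈ H_0(K_b) with θ_{0,b}(s_i) = t_i for every i, whose cosets modulo im(φ_{b−1}) are linearly independent in H_0(K_b)/im(φ_{b−1}), and such that each s_i has persistence interval (b, d_i) in H_0(K_•). In particular, the 0-th persistence barcode of the filtration K̃_• is contained (as a multiset of intervals) in the 0-th persistence barcode of the filtration K_•. -/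

import Mathlib

/-- An abstract simplicial complex on a vertex type `α`: a collection of nonempty
finite subsets of `α` closed under passing to nonempty subsets. -/
structure AbsSC (α : Type) where
  faces : Set (Finset α)
  not_empty_mem : ∅ ∉ faces
  down_closed : ∀ {s t : Finset α}, s ∈ faces → t ⊆ s → t.Nonempty → t ∈ faces

namespace AbsSC

variable {α : Type}

/-- The vertex set of an abstract simplicial complex. -/
def vertexSet (K : AbsSC α) : Set α := {v | {v} ∈ K.faces}

/-- The type of `q`-simplices (faces with `q+1` vertices). -/
def simplices (K : AbsSC α) (q : ℕ) : Type :=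
  {s : Finset α // s ∈ K.faces ∧ s.card = q + 1}

/-- The space of `q`-chains over `ℤ/2`: formal sums of `q`-simplices. -/
abbrev Chain (K : AbsSC α) (q : ℕ) : Type := K.simplices q →₀ ZMod 2

/-- The sum of the `q`-dimensional faces of a `(q+1)`-simplex. -/
noncomputable def faceChain (K : AbsSC α) (q : ℕ) (s : K.simplices (q + 1)) : K.Chain q :=
  ∑ t ∈ (s.1.powersetCard (q + 1)).attach,
    Finsupp.single
      ⟨t.1, by
        obtain ⟨hsub, hcard⟩ := Finset.mem_powersetCard.mp t.2
        refine ⟨K.down_closed s.2.1 hsub ?_, hcard⟩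
        rw [← Finset.card_pos, hcard]
        omega⟩
      (1 : ZMod 2)

/-- The boundary map `∂_{q+1} : C_{q+1}(K) → C_q(K)`, sending each `(q+1)`-simplex to
the sum of its `q`-dimensional faces. -/
noncomputable def boundary (K : AbsSC α) (q : ℕ) :
    K.Chain (q + 1) →ₗ[ZMod 2] K.Chain q :=
  Finsupp.lsum (ZMod 2) fun s => LinearMap.toSpanSingleton (ZMod 2) (K.Chain q) (K.faceChain q s)

/-- The cycle subspace: `ker ∂_q` (all of `C_0` in degree `0`). -/
noncomputable def cycles (K : AbsSC α) : (q : ℕ) → Submodule (ZMod 2) (K.Chain q)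
  | 0 => ⊤
  | q + 1 => LinearMap.ker (K.boundary q)

/-- The boundaries, viewed as a submodule of the cycles. -/
noncomputable def boundariesIn (K : AbsSC α) (q : ℕ) :
    Submodule (ZMod 2) (K.cycles q) :=
  Submodule.comap (K.cycles q).subtype (LinearMap.range (K.boundary q))

/-- The `q`-th simplicial homology over `ℤ/2`: `H_q(K) = ker ∂_q / im ∂_{q+1}`. -/
def Homology (K : AbsSC α) (q : ℕ) : Type :=
  (K.cycles q) ⧸ (K.boundariesIn q)

noncomputable instance (K : AbsSC α) (q : ℕ) : AddCommGroup (K.Homology q) :=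
  inferInstanceAs (AddCommGroup ((K.cycles q) ⧸ (K.boundariesIn q)))

noncomputable instance (K : AbsSC α) (q : ℕ) : Module (ZMod 2) (K.Homology q) :=
  inferInstanceAs (Module (ZMod 2) ((K.cycles q) ⧸ (K.boundariesIn q)))

/-- The homology class of a cycle. -/
noncomputable def hClass (K : AbsSC α) (q : ℕ) (c : K.Chain q) (hc : c ∈ K.cycles q) :
    K.Homology q :=
  Submodule.Quotient.mk ⟨c, hc⟩

/-- The chain map induced by an inclusion of simplicial complexes. -/
noncomputable def chainMap (K L : AbsSC α) (h : K.faces ⊆ L.faces) (q : ℕ) :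
    K.Chain q →ₗ[ZMod 2] L.Chain q :=
  Finsupp.lmapDomain (ZMod 2) (ZMod 2) fun s : K.simplices q =>
    (⟨s.1, h s.2.1, s.2.2⟩ : L.simplices q)

/-- `θ` is the map on `q`-th homology induced by the inclusion `K ⊆ L`: it sends the
class of every cycle `c` of `K` to the class of the image chain of `c` in `L`. -/
def InducedHom (K L : AbsSC α) (q : ℕ)
    (θ : K.Homology q →ₗ[ZMod 2] L.Homology q) : Prop :=
  ∃ h : K.faces ⊆ L.faces,
    ∀ (c : K.Chain q) (hc : c ∈ K.cycles q),
      ∃ hc' : chainMap K L h q c ∈ L.cycles q,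
        θ (K.hClass q c hc) = L.hClass q (chainMap K L h q c) hc'

end AbsSC

/-- The faces of the gluing stars `S = S_1 ⊔ ⋯ ⊔ S_k`: for each `j`, the vertex `{z j}`,
the vertices `{v}` for `v ∈ P j`, and the edges `{z j, v}` for `v ∈ P j`. -/
def starFaces {α : Type} [DecidableEq α] {k : ℕ} (P : Fin k → Set α) (z : Fin k → α) :
    Set (Finset α) :=
  {s | ∃ j : Fin k, s = {z j} ∨ ∃ v ∈ P j, s = {v} ∨ s = {z j, v}}

section Tower

variable {W : ℕ → Type} [∀ i, AddCommGroup (W i)] [∀ i, Module (ZMod 2) (W i)]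

/-- The composite `φ_{i,j} = φ_{j-1} ∘ ⋯ ∘ φ_i` of the connecting maps of a tower
(the identity when `i = j`). -/
noncomputable def comps (φ : ∀ i, W i →ₗ[ZMod 2] W (i + 1)) {i j : ℕ} (h : i ≤ j) :
    W i →ₗ[ZMod 2] W j :=
  Nat.leRecOn (C := fun m => W i →ₗ[ZMod 2] W m) h (fun {m} g => (φ m).comp g) LinearMap.id

/-- `s ∈ W b` has persistence interval `(b, d)` with finite death `d ∈ {b+1, …, n}`:
`s ∉ im φ_{b-1}`, `φ_{b,d'}(s) ∉ im φ_{b-1,d'}` for all `b ≤ d' < d`, and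
`φ_{b,d}(s) ∈ im φ_{b-1,d}`. -/
def HasPersIntervalFin (φ : ∀ i, W i →ₗ[ZMod 2] W (i + 1)) (n b d : ℕ) (s : W b) : Prop :=
  ∃ (_ : 1 ≤ b) (hbd : b < d) (_ : d ≤ n),
    s ∉ LinearMap.range (comps φ (Nat.sub_le b 1)) ∧
    (∀ (d' : ℕ) (hd' : b ≤ d'), d' < d →
      comps φ hd' s ∉ LinearMap.range (comps φ (Nat.le_trans (Nat.sub_le b 1) hd'))) ∧
    comps φ (Nat.le_of_lt hbd) s ∈
      LinearMap.range (comps φ (Nat.le_trans (Nat.sub_le b 1) (Nat.le_of_lt hbd)))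

/-- `s ∈ W b` has persistence interval `(b, ∞)`: `s ∉ im φ_{b-1}` and
`φ_{b,d'}(s) ∉ im φ_{b-1,d'}` for all `b ≤ d' ≤ n`. -/
def HasPersIntervalInf (φ : ∀ i, W i →ₗ[ZMod 2] W (i + 1)) (n b : ℕ) (s : W b) : Prop :=
  ∃ _ : 1 ≤ b,
    s ∉ LinearMap.range (comps φ (Nat.sub_le b 1)) ∧
    ∀ (d' : ℕ) (hd' : b ≤ d'), d' ≤ n →
      comps φ hd' s ∉ LinearMap.range (comps φ (Nat.le_trans (Nat.sub_le b 1) hd'))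

end Tower

/-!
Each apex `z j` is joined by a star edge to a vertex of `K 1 ⊆ K i`, so `θ i` is onto for
`1 ≤ i` (and trivially for `i = 0`, as `H_0(K̃ 0) = 0`). If a `0`-cycle `c` of `K d` bounds a chain
`e` of `K̃ d`, split `e` into a part in `K d` and a part of star edges; then `c` is homologous in
`K d` to the boundary of the star part, a chain of `K d` that avoids the apexes and hence lives on
vertices of `K b`, where it already bounds in `K̃ b`. So `ker θ d = φ_{b,d} (ker θ b)`.

The rest is linear algebra on the ladder `θ : H_0(K •) → H_0(K̃ •)`. Membership in the image of
`φ` is carried by `θ` to membership in the image of `ψ`, so every lift `s` of `t` is born at `b`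
and survives at least as long as `t`, and the cosets of the lifts stay independent. If `t` dies
at `d`, say `ψ_{b,d} t = ψ_{b-1,d} y`, lift `y` to `x`; the discrepancy
`φ_{b,d} s - φ_{b-1,d} x ∈ ker θ d` equals `φ_{b,d} u` with `u ∈ ker θ b`, and `s - u` is a lift
of `t` dying at `d`.
-/

section Ladder

variable {W : ℕ → Type} [∀ i, AddCommGroup (W i)] [∀ i, Module (ZMod 2) (W i)]

theorem comps_self (φ : ∀ i, W i →ₗ[ZMod 2] W (i + 1)) {i : ℕ} (h : i ≤ i) :
    comps φ h = LinearMap.id :=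
  Nat.leRecOn_self _

theorem comps_succ (φ : ∀ i, W i →ₗ[ZMod 2] W (i + 1)) {i j : ℕ} (h : i ≤ j)
    (h' : i ≤ j + 1) : comps φ h' = (φ j).comp (comps φ h) :=
  Nat.leRecOn_succ h _

variable {V : ℕ → Type} [∀ i, AddCommGroup (V i)] [∀ i, Module (ZMod 2) (V i)]
  {φ : ∀ i, V i →ₗ[ZMod 2] V (i + 1)} {ψ : ∀ i, W i →ₗ[ZMod 2] W (i + 1)}
  {θ : ∀ i, V i →ₗ[ZMod 2] W i} {n : ℕ}

theorem comps_comm (hsq : ∀ i, i < n → (θ (i + 1)).comp (φ i) = (ψ i).comp (θ i))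
    {i j : ℕ} (h : i ≤ j) (hj : j ≤ n) (x : V i) :
    θ j (comps φ h x) = comps ψ h (θ i x) := by
  induction j, h using Nat.le_induction with
  | base => rw [comps_self, comps_self]; rfl
  | succ j h ih =>
    rw [comps_succ φ h, comps_succ ψ h, LinearMap.comp_apply, LinearMap.comp_apply,
      ← ih (by omega), ← LinearMap.comp_apply (θ (j + 1)), hsq j (by omega),
      LinearMap.comp_apply]

theorem map_mem_range_comps (hsq : ∀ i, i < n → (θ (i + 1)).comp (φ i) = (ψ i).comp (θ i))
    {i j : ℕ} (h : i ≤ j) (hj : j ≤ n) {x : V j} (hx : x ∈ LinearMap.range (comps φ h)) :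
    θ j x ∈ LinearMap.range (comps ψ h) := by
  obtain ⟨y, rfl⟩ := hx
  exact ⟨θ i y, (comps_comm hsq h hj y).symm⟩

theorem comps_notMem_range_of_map
    (hsq : ∀ i, i < n → (θ (i + 1)).comp (φ i) = (ψ i).comp (θ i))
    {a b d : ℕ} (h : b ≤ d) (h' : a ≤ d) (hd : d ≤ n) {s : V b}
    (hs : comps ψ h (θ b s) ∉ LinearMap.range (comps ψ h')) :
    comps φ h s ∉ LinearMap.range (comps φ h') := fun hmem =>
  hs (comps_comm hsq h hd s ▸ map_mem_range_comps hsq h' hd hmem)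

theorem linearIndependent_mk_range_comps_of_map
    (hsq : ∀ i, i < n → (θ (i + 1)).comp (φ i) = (ψ i).comp (θ i))
    {i j : ℕ} (h : i ≤ j) (hj : j ≤ n) {ι : Type*} {s : ι → V j}
    (hs : LinearIndependent (ZMod 2)
      fun k => Submodule.Quotient.mk (p := LinearMap.range (comps ψ h)) (θ j (s k))) :
    LinearIndependent (ZMod 2)
      fun k => Submodule.Quotient.mk (p := LinearMap.range (comps φ h)) (s k) :=
  LinearIndependent.of_comp
    (Submodule.mapQ _ _ (θ j) fun _ hx =>
      Submodule.mem_comap.mpr (map_mem_range_comps hsq h hj hx)) hs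

theorem HasPersIntervalInf.of_map
    (hsq : ∀ i, i < n → (θ (i + 1)).comp (φ i) = (ψ i).comp (θ i))
    {b : ℕ} (hbn : b ≤ n) {s : V b} (hs : HasPersIntervalInf ψ n b (θ b s)) :
    HasPersIntervalInf φ n b s := by
  obtain ⟨hb, hbirth, halive⟩ := hs
  exact ⟨hb, fun hmem => hbirth (map_mem_range_comps hsq _ hbn hmem),
    fun d' hd' hd'n => comps_notMem_range_of_map hsq hd' _ hd'n (halive d' hd' hd'n)⟩

theorem HasPersIntervalFin.of_map
    (hsq : ∀ i, i < n → (θ (i + 1)).comp (φ i) = (ψ i).comp (θ i))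
    {b d : ℕ} {s : V b} (hs : HasPersIntervalFin ψ n b d (θ b s))
    (hdeath : ∀ hbd : b ≤ d,
      comps φ hbd s ∈ LinearMap.range (comps φ (Nat.sub_le b 1 |>.trans hbd))) :
    HasPersIntervalFin φ n b d s := by
  obtain ⟨hb, hbd, hdn, hbirth, halive, -⟩ := hs
  exact ⟨hb, hbd, hdn, fun hmem => hbirth (map_mem_range_comps hsq _ (by omega) hmem),
    fun d' hd' hd'd => comps_notMem_range_of_map hsq hd' _ (by omega) (halive d' hd' hd'd),
    hdeath _⟩

theorem HasPersIntervalFin.exists_lift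
    (hsq : ∀ i, i < n → (θ (i + 1)).comp (φ i) = (ψ i).comp (θ i))
    (hsurj : ∀ i, i ≤ n → Function.Surjective (θ i)) {b d : ℕ}
    (hker : ∀ (hbd : b ≤ d), d ≤ n →
      LinearMap.ker (θ d) ≤ (LinearMap.ker (θ b)).map (comps φ hbd))
    {t : W b} (ht : HasPersIntervalFin ψ n b d t) :
    ∃ s, θ b s = t ∧ HasPersIntervalFin φ n b d s := by
  obtain ⟨-, hbd, hdn, -, -, y, hy⟩ := id ht
  obtain ⟨s₀, rfl⟩ := hsurj b (by omega) t
  obtain ⟨x, rfl⟩ := hsurj (b - 1) (by omega) y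
  have hgap : comps φ hbd.le s₀ - comps φ (Nat.sub_le b 1 |>.trans hbd.le) x ∈
      LinearMap.ker (θ d) := by
    rw [LinearMap.mem_ker, map_sub, comps_comm hsq _ hdn, comps_comm hsq _ hdn, hy, sub_self]
  obtain ⟨u, hu, hu'⟩ := hker hbd.le hdn hgap
  have hθs : θ b (s₀ - u) = θ b s₀ := by rw [map_sub, LinearMap.mem_ker.mp hu, sub_zero]
  refine ⟨s₀ - u, hθs, HasPersIntervalFin.of_map hsq (hθs ▸ ht) fun _ => ⟨x, ?_⟩⟩
  rw [map_sub, hu', sub_sub_cancel]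

end Ladder

namespace AbsSC

variable {α : Type}

-- `simplices` is a plain `def`, so `Subtype.ext` does not see through it.
theorem simplices_ext {K : AbsSC α} {q : ℕ} {s t : K.simplices q} (h : s.1 = t.1) : s = t :=
  Subtype.ext h

theorem simplices_ext_iff {K : AbsSC α} {q : ℕ} {s t : K.simplices q} : s = t ↔ s.1 = t.1 :=
  ⟨congrArg (fun x : K.simplices q => x.1), simplices_ext⟩

def inclSimplex (K L : AbsSC α) (h : K.faces ⊆ L.faces) (q : ℕ) (s : K.simplices q) :
    L.simplices q :=
  ⟨s.1, h s.2.1, s.2.2⟩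

theorem inclSimplex_injective (K L : AbsSC α) (h : K.faces ⊆ L.faces) (q : ℕ) :
    Function.Injective (inclSimplex K L h q) := fun _ _ hst =>
  simplices_ext ((simplices_ext_iff (K := L)).mp hst)

section ChainMap

variable {K L M : AbsSC α} (h : K.faces ⊆ L.faces) {q : ℕ}

theorem chainMap_eq_lmapDomain :
    chainMap K L h q = Finsupp.lmapDomain (ZMod 2) (ZMod 2) (inclSimplex K L h q) :=
  rfl

theorem chainMap_single (s : K.simplices q) (r : ZMod 2) :
    chainMap K L h q (Finsupp.single s r) = Finsupp.single (inclSimplex K L h q s) r :=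
  Finsupp.mapDomain_single

theorem chainMap_apply_inclSimplex (c : K.Chain q) (s : K.simplices q) :
    chainMap K L h q c (inclSimplex K L h q s) = c s :=
  Finsupp.mapDomain_apply (inclSimplex_injective K L h q) c s

theorem chainMap_injective : Function.Injective (chainMap K L h q) :=
  Finsupp.mapDomain_injective (inclSimplex_injective K L h q)

theorem chainMap_self (h : K.faces ⊆ K.faces) : chainMap K K h q = LinearMap.id :=
  Finsupp.lmapDomain_id _ _

theorem chainMap_comp (h' : L.faces ⊆ M.faces) (h'' : K.faces ⊆ M.faces) :
    (chainMap L M h' q).comp (chainMap K L h q) = chainMap K M h'' q :=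
  (Finsupp.lmapDomain_comp _ _ _ _).symm

theorem range_chainMap :
    LinearMap.range (chainMap K L h q) =
      Finsupp.supported (ZMod 2) (ZMod 2) {s : L.simplices q | s.1 ∈ K.faces} := by
  rw [chainMap_eq_lmapDomain, LinearMap.range_eq_map, ← Finsupp.supported_univ,
    Finsupp.lmapDomain_supported, Set.image_univ]
  congr 1
  ext s
  exact ⟨fun ⟨t, ht⟩ => ht ▸ t.2.1, fun hs => ⟨⟨s.1, hs, s.2.2⟩, rfl⟩⟩

theorem range_chainMap_sup_eq_top (h' : M.faces ⊆ L.faces)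
    (hL : L.faces ⊆ K.faces ∪ M.faces) :
    LinearMap.range (chainMap K L h q) ⊔ LinearMap.range (chainMap M L h' q) = ⊤ := by
  rw [range_chainMap, range_chainMap, ← Finsupp.supported_union, eq_top_iff]
  exact fun c _ => (Finsupp.mem_supported _ c).mpr fun s _ => hL s.2.1

theorem mem_faces_of_chainMap_eq {h' : M.faces ⊆ L.faces} {c : K.Chain q} {c' : M.Chain q}
    (hc : chainMap K L h q c = chainMap M L h' q c') {s : K.simplices q} (hs : s ∈ c.support) :
    s.1 ∈ M.faces := by
  have hmem : chainMap M L h' q c' ∈ LinearMap.range (chainMap M L h' q) := ⟨c', rfl⟩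
  rw [range_chainMap, Finsupp.mem_supported] at hmem
  refine hmem (?_ : inclSimplex K L h q s ∈ _)
  rw [Finset.mem_coe, Finsupp.mem_support_iff, ← hc, chainMap_apply_inclSimplex]
  exact Finsupp.mem_support_iff.mp hs

end ChainMap

section Boundary

variable {K L : AbsSC α} {q : ℕ}

theorem faceChain_apply [DecidableEq α] (s : K.simplices (q + 1)) (t : K.simplices q) :
    K.faceChain q s t = if t.1 ⊆ s.1 then 1 else 0 := by
  classical
  rw [faceChain, Finsupp.finsetSum_apply]
  calc _ = ∑ u ∈ (s.1.powersetCard (q + 1)).attach, if u.1 = t.1 then (1 : ZMod 2) else 0 :=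
        Finset.sum_congr rfl fun u _ => Finsupp.single_apply.trans
          (if_congr simplices_ext_iff rfl rfl)
    _ = _ := by
      rw [Finset.sum_attach _ (fun u => if u = t.1 then (1 : ZMod 2) else 0), Finset.sum_ite_eq']
      exact if_congr (Finset.mem_powersetCard.trans (and_iff_left t.2.2)) rfl rfl

theorem faceChain_pair [DecidableEq α] {a b : α} (hab : a ≠ b) (E : K.simplices 1)
    (hE : E.1 = {a, b}) (ha : {a} ∈ K.faces) (hb : {b} ∈ K.faces) :
    K.faceChain 0 E = Finsupp.single ⟨{a}, ha, Finset.card_singleton a⟩ 1 +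
      Finsupp.single ⟨{b}, hb, Finset.card_singleton b⟩ 1 := by
  ext t
  obtain ⟨y, hy⟩ := Finset.card_eq_one.mp t.2.2
  classical
  have hvertex : ∀ (c : α) (hc : {c} ∈ K.faces),
      Finsupp.single (⟨{c}, hc, Finset.card_singleton c⟩ : K.simplices 0) (1 : ZMod 2) t =
        if c = y then 1 else 0 := fun c hc =>
    Finsupp.single_apply.trans (if_congr (simplices_ext_iff.trans (by rw [hy]; simp)) rfl rfl)
  erw [faceChain_apply, Finsupp.add_apply, hvertex a ha, hvertex b hb, hE, hy]
  by_cases hya : a = y <;> by_cases hyb : b = y <;> simp_all [eq_comm]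

theorem boundary_single (s : K.simplices (q + 1)) (r : ZMod 2) :
    K.boundary q (Finsupp.single s r) = r • K.faceChain q s := by
  rw [boundary, Finsupp.lsum_single, LinearMap.toSpanSingleton_apply]

variable (h : K.faces ⊆ L.faces)

theorem chainMap_faceChain (s : K.simplices (q + 1)) :
    chainMap K L h q (K.faceChain q s) = L.faceChain q (inclSimplex K L h (q + 1) s) := by
  classical
  ext t
  by_cases ht : t ∈ Set.range (inclSimplex K L h q)
  · obtain ⟨t, rfl⟩ := ht
    rw [chainMap_apply_inclSimplex, faceChain_apply, faceChain_apply]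
    rfl
  · have hts : ¬ t.1 ⊆ (inclSimplex K L h (q + 1) s).1 := fun hts =>
      ht ⟨⟨t.1, K.down_closed s.2.1 hts (Finset.card_pos.mp (by rw [t.2.2]; omega)), t.2.2⟩,
        rfl⟩
    rw [faceChain_apply, if_neg hts, chainMap_eq_lmapDomain, Finsupp.lmapDomain_apply,
      Finsupp.mapDomain_of_notMem_range _ _ ht]

theorem chainMap_boundary (c : K.Chain (q + 1)) :
    chainMap K L h q (K.boundary q c) = L.boundary q (chainMap K L h (q + 1) c) := by
  induction c using Finsupp.induction_linear with
  | zero => simp only [map_zero]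
  | add c c' hc hc' => simp only [map_add, hc, hc']
  | single s r =>
    rw [boundary_single, chainMap_single, boundary_single, map_smul, chainMap_faceChain]

end Boundary

section Homology

variable (K : AbsSC α)

noncomputable def classMap : K.Chain 0 →ₗ[ZMod 2] K.Homology 0 :=
  (K.boundariesIn 0).mkQ ∘ₗ
    LinearMap.codRestrict (K.cycles 0) LinearMap.id fun _ => Submodule.mem_top

theorem classMap_surjective : Function.Surjective K.classMap := by
  intro x
  obtain ⟨⟨c, hc⟩, rfl⟩ := Submodule.mkQ_surjective _ x
  exact ⟨c, rfl⟩

theorem classMap_eq_zero_iff (c : K.Chain 0) :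
    K.classMap c = 0 ↔ c ∈ LinearMap.range (K.boundary 0) :=
  Submodule.Quotient.mk_eq_zero _

theorem classMap_boundary (e : K.Chain 1) : K.classMap (K.boundary 0 e) = 0 :=
  (K.classMap_eq_zero_iff _).mpr ⟨e, rfl⟩

theorem subsingleton_homology_zero (hK : K.faces = ∅) : Subsingleton (K.Homology 0) := by
  have : IsEmpty (K.simplices 0) := ⟨fun s => (hK ▸ s.2.1 : s.1 ∈ (∅ : Set (Finset α)))⟩
  exact K.classMap_surjective.subsingleton

end Homology

namespace InducedHom

variable {K L M : AbsSC α}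

theorem subset {q : ℕ} {f : K.Homology q →ₗ[ZMod 2] L.Homology q} (hf : InducedHom K L q f) :
    K.faces ⊆ L.faces :=
  hf.choose

theorem classMap_apply {f : K.Homology 0 →ₗ[ZMod 2] L.Homology 0} (hf : InducedHom K L 0 f)
    (h : K.faces ⊆ L.faces) (c : K.Chain 0) :
    f (K.classMap c) = L.classMap (chainMap K L h 0 c) :=
  (hf.choose_spec c Submodule.mem_top).choose_spec

theorem of_classMap {f : K.Homology 0 →ₗ[ZMod 2] L.Homology 0} (h : K.faces ⊆ L.faces)
    (hf : ∀ c, f (K.classMap c) = L.classMap (chainMap K L h 0 c)) : InducedHom K L 0 f :=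
  ⟨h, fun c _ => ⟨Submodule.mem_top, hf c⟩⟩

theorem id : InducedHom K K 0 LinearMap.id :=
  of_classMap subset_rfl fun c => by rw [chainMap_self]; rfl

theorem comp {f : K.Homology 0 →ₗ[ZMod 2] L.Homology 0}
    {g : L.Homology 0 →ₗ[ZMod 2] M.Homology 0}
    (hf : InducedHom K L 0 f) (hg : InducedHom L M 0 g) : InducedHom K M 0 (g ∘ₗ f) :=
  of_classMap (hf.subset.trans hg.subset) fun c => by
    rw [LinearMap.comp_apply, hf.classMap_apply hf.subset, hg.classMap_apply hg.subset,
      ← LinearMap.comp_apply (chainMap L M _ 0), chainMap_comp]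

theorem comps {K : ℕ → AbsSC α}
    {φ : ∀ i, (K i).Homology 0 →ₗ[ZMod 2] (K (i + 1)).Homology 0}
    {n : ℕ} (hφ : ∀ i, i < n → InducedHom (K i) (K (i + 1)) 0 (φ i))
    {i j : ℕ} (h : i ≤ j) (hj : j ≤ n) : InducedHom (K i) (K j) 0 (comps φ h) := by
  induction j, h using Nat.le_induction with
  | base => rw [comps_self]; exact InducedHom.id
  | succ j h ih => rw [comps_succ φ h]; exact (ih (by omega)).comp (hφ j (by omega))

end InducedHom

section Star

variable [DecidableEq α] {k : ℕ} {P : Fin k → Set α} {z : Fin k → α}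

theorem exists_eq_singleton_of_mem_starFaces {s : Finset α} (hs : s ∈ starFaces P z)
    (hcard : s.card = 1) : ∃ j, s = {z j} ∨ ∃ v ∈ P j, s = {v} := by
  obtain ⟨j, hj | ⟨v, hv, hsv | rfl⟩⟩ := hs
  · exact ⟨j, Or.inl hj⟩
  · exact ⟨j, Or.inr ⟨v, hv, hsv⟩⟩
  · obtain rfl : z j = v := by
      by_contra hne
      rw [Finset.card_pair hne] at hcard
      omega
    exact ⟨j, Or.inl (Finset.pair_eq_singleton _)⟩

theorem InducedHom.surjective_of_faces_eq_union_starFaces {K L : AbsSC α}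
    (hL : L.faces = K.faces ∪ starFaces P z) (hP : ∀ j, ∀ v ∈ P j, {v} ∈ K.faces)
    (hPne : ∀ j, (P j).Nonempty) {θ : K.Homology 0 →ₗ[ZMod 2] L.Homology 0}
    (hθ : InducedHom K L 0 θ) : Function.Surjective θ := by
  have hKL := hθ.subset
  have hK : ∀ s : L.simplices 0, s.1 ∈ K.faces →
      L.classMap (Finsupp.single s 1) ∈ LinearMap.range θ := fun s hs =>
    ⟨K.classMap (Finsupp.single (⟨s.1, hs, s.2.2⟩ : K.simplices 0) 1), by
      rw [hθ.classMap_apply hKL]; exact congrArg L.classMap (chainMap_single hKL _ 1)⟩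
  have hvertex : ∀ s : L.simplices 0, L.classMap (Finsupp.single s 1) ∈ LinearMap.range θ := by
    rintro ⟨S, hSL, hScard⟩
    by_cases hSK : S ∈ K.faces
    · exact hK _ hSK
    have hSS : S ∈ starFaces P z := (hL ▸ hSL : S ∈ K.faces ∪ _).resolve_left hSK
    obtain ⟨j, rfl | ⟨v, hv, rfl⟩⟩ := exists_eq_singleton_of_mem_starFaces hSS hScard
    swap
    · exact absurd (hP j v hv) hSK
    obtain ⟨v, hv⟩ := hPne j
    have hne : z j ≠ v := fun hzv => hSK (hzv ▸ hP j v hv)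
    let E : L.simplices 1 :=
      ⟨{z j, v}, hL ▸ Or.inr ⟨j, Or.inr ⟨v, hv, Or.inr rfl⟩⟩, Finset.card_pair hne⟩
    let sv : L.simplices 0 := ⟨{v}, hKL (hP j v hv), Finset.card_singleton v⟩
    have hbd : L.boundary 0 (Finsupp.single E 1) = Finsupp.single ⟨{z j}, hSL, hScard⟩ 1 +
        Finsupp.single sv 1 := by
      rw [boundary_single, one_smul, faceChain_pair hne E rfl hSL sv.2.1]
    rw [eq_sub_of_add_eq hbd.symm, map_sub, classMap_boundary, zero_sub]
    exact neg_mem (hK sv (hP j v hv))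
  intro x
  obtain ⟨c, rfl⟩ := L.classMap_surjective x
  show L.classMap c ∈ LinearMap.range θ
  induction c using Finsupp.induction_linear with
  | zero => rw [map_zero]; exact zero_mem _
  | add c c' hc hc' => rw [map_add]; exact add_mem hc hc'
  | single s r =>
    rw [← Finsupp.smul_single_one, map_smul]
    exact Submodule.smul_mem _ r (hvertex s)

theorem mem_faces_of_mem_faces_union_starFaces {K K' L : AbsSC α}
    (hL : L.faces = K.faces ∪ starFaces P z) (hP : ∀ j, ∀ v ∈ P j, {v} ∈ K.faces)
    (hz : ∀ j, {z j} ∉ K'.faces) {s : Finset α} (hsK' : s ∈ K'.faces) (hsL : s ∈ L.faces)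
    (hcard : s.card = 1) : s ∈ K.faces := by
  rw [hL] at hsL
  refine hsL.elim id fun hsS => ?_
  obtain ⟨j, rfl | ⟨v, hv, rfl⟩⟩ := exists_eq_singleton_of_mem_starFaces hsS hcard
  · exact absurd hsK' (hz j)
  · exact hP j v hv

theorem ker_le_map_ker_of_faces_eq_union_starFaces {K K' L L' : AbsSC α}
    (hL : L.faces = K.faces ∪ starFaces P z) (hL' : L'.faces = K'.faces ∪ starFaces P z)
    (hP : ∀ j, ∀ v ∈ P j, {v} ∈ K.faces) (hz : ∀ j, {z j} ∉ K'.faces)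
    {θ : K.Homology 0 →ₗ[ZMod 2] L.Homology 0} (hθ : InducedHom K L 0 θ)
    {θ' : K'.Homology 0 →ₗ[ZMod 2] L'.Homology 0} (hθ' : InducedHom K' L' 0 θ')
    {Φ : K.Homology 0 →ₗ[ZMod 2] K'.Homology 0} (hΦ : InducedHom K K' 0 Φ) :
    LinearMap.ker θ' ≤ (LinearMap.ker θ).map Φ := by
  have hKK' := hΦ.subset
  have hK'L' := hθ'.subset
  have hLL' : L.faces ⊆ L'.faces := by
    rw [hL, hL']
    exact Set.union_subset_union_left _ hKK'
  intro w hw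
  obtain ⟨c, rfl⟩ := K'.classMap_surjective w
  rw [LinearMap.mem_ker, hθ'.classMap_apply hK'L', classMap_eq_zero_iff] at hw
  obtain ⟨e, he⟩ := hw
  have hcover := range_chainMap_sup_eq_top (q := 1) hK'L' hLL' (by
    rw [hL', hL]
    exact Set.union_subset_union_right _ Set.subset_union_right)
  obtain ⟨_, ⟨eK', rfl⟩, _, ⟨eL, rfl⟩, rfl⟩ :=
    Submodule.mem_sup.mp (hcover.symm ▸ Submodule.mem_top : e ∈ _)
  have hc₀ : chainMap K' L' hK'L' 0 (c - K'.boundary 0 eK') =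
      chainMap L L' hLL' 0 (L.boundary 0 eL) := by
    rw [map_sub, ← he, map_add, chainMap_boundary, chainMap_boundary, add_sub_cancel_left]
  obtain ⟨c₁, hc₁⟩ : c - K'.boundary 0 eK' ∈ LinearMap.range (chainMap K K' hKK' 0) := by
    rw [range_chainMap, Finsupp.mem_supported]
    exact fun s hs => mem_faces_of_mem_faces_union_starFaces hL hP hz s.2.1
      (mem_faces_of_chainMap_eq hK'L' hc₀ hs) s.2.2
  refine ⟨K.classMap c₁, ?_, ?_⟩
  · have hbd : chainMap K L hθ.subset 0 c₁ = L.boundary 0 eL := by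
      apply chainMap_injective hLL'
      rw [← hc₀, ← hc₁, ← LinearMap.comp_apply, ← LinearMap.comp_apply,
        chainMap_comp (h'' := hKK'.trans hK'L'), chainMap_comp]
    rw [SetLike.mem_coe, LinearMap.mem_ker, hθ.classMap_apply hθ.subset, hbd, classMap_boundary]
  · rw [hΦ.classMap_apply hKK', hc₁, map_sub, classMap_boundary, sub_zero]

end Star

end AbsSC

theorem stmt12_general {α : Type} [DecidableEq α] (n k : ℕ)
    (K Kt : ℕ → AbsSC α)
    (hKt0 : (Kt 0).faces = ∅)
    (P : Fin k → Set α)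
    (hPne : ∀ j, (P j).Nonempty)
    (hPunion : (⋃ j, P j) = (K 1).vertexSet)
    (z : Fin k → α)
    (hznew : ∀ (j : Fin k) (i : ℕ), i ≤ n → z j ∉ (K i).vertexSet)
    (hKt : ∀ i, 1 ≤ i → i ≤ n → (Kt i).faces = (K i).faces ∪ starFaces P z)
    (φ : ∀ i : ℕ, (K i).Homology 0 →ₗ[ZMod 2] (K (i + 1)).Homology 0)
    (ψ : ∀ i : ℕ, (Kt i).Homology 0 →ₗ[ZMod 2] (Kt (i + 1)).Homology 0)
    (θ : ∀ i : ℕ, (K i).Homology 0 →ₗ[ZMod 2] (Kt i).Homology 0)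
    (hφ : ∀ i, i < n → AbsSC.InducedHom (K i) (K (i + 1)) 0 (φ i))
    (hθ : ∀ i, i ≤ n → AbsSC.InducedHom (K i) (Kt i) 0 (θ i))
    (hsq : ∀ i, i < n → (θ (i + 1)).comp (φ i) = (ψ i).comp (θ i))
    (b : ℕ) (hb1 : 1 ≤ b) (hbn : b ≤ n)
    (m : ℕ)
    (t : Fin m → (Kt b).Homology 0)
    (dd : Fin m → ℕ∞)
    (htindep : LinearIndependent (ZMod 2)
      (fun i : Fin m =>
        Submodule.Quotient.mk (p := LinearMap.range (comps ψ (Nat.sub_le b 1))) (t i)))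
    (htfin : ∀ (i : Fin m) (di : ℕ), dd i = (di : ℕ∞) → HasPersIntervalFin ψ n b di (t i))
    (htinf : ∀ i : Fin m, dd i = ⊤ → HasPersIntervalInf ψ n b (t i)) :
    ∃ s : Fin m → (K b).Homology 0,
      (∀ i, θ b (s i) = t i) ∧
      LinearIndependent (ZMod 2)
        (fun i : Fin m =>
          Submodule.Quotient.mk (p := LinearMap.range (comps φ (Nat.sub_le b 1))) (s i)) ∧
      (∀ (i : Fin m) (di : ℕ), dd i = (di : ℕ∞) → HasPersIntervalFin φ n b di (s i)) ∧
      (∀ i : Fin m, dd i = ⊤ → HasPersIntervalInf φ n b (s i)) := by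
  have hP : ∀ i, 1 ≤ i → i ≤ n → ∀ j, ∀ v ∈ P j, {v} ∈ (K i).faces := fun i hi hin j v hv =>
    (AbsSC.InducedHom.comps hφ hi hin).subset
      (hPunion ▸ Set.mem_iUnion_of_mem j hv : v ∈ (K 1).vertexSet)
  have hsurj : ∀ i, i ≤ n → Function.Surjective (θ i) := by
    rintro (_ | i) hin
    · have := (Kt 0).subsingleton_homology_zero hKt0
      exact fun x => ⟨0, Subsingleton.elim _ _⟩
    · exact (hθ _ hin).surjective_of_faces_eq_union_starFaces (hKt _ (by omega) hin)
        (hP _ (by omega) hin) hPne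
  have hker : ∀ d (hbd : b ≤ d), d ≤ n →
      LinearMap.ker (θ d) ≤ (LinearMap.ker (θ b)).map (comps φ hbd) := fun d hbd hdn =>
    AbsSC.ker_le_map_ker_of_faces_eq_union_starFaces (hKt b hb1 hbn)
      (hKt d (hb1.trans hbd) hdn) (hP b hb1 hbn) (fun j => hznew j d hdn) (hθ b hbn) (hθ d hdn)
      (AbsSC.InducedHom.comps hφ hbd hdn)
  have hlift : ∀ i, ∃ s, θ b s = t i ∧
      (∀ di : ℕ, dd i = di → HasPersIntervalFin φ n b di s) ∧
      (dd i = ⊤ → HasPersIntervalInf φ n b s) := by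
    intro i
    cases hdi : dd i with
    | top =>
      obtain ⟨s, hs⟩ := hsurj b hbn (t i)
      exact ⟨s, hs, fun _ h => absurd h (ENat.top_ne_natCast _),
        fun _ => HasPersIntervalInf.of_map hsq hbn (hs ▸ htinf i hdi)⟩
    | coe di =>
      obtain ⟨s, hs, hfin⟩ := (htfin i di hdi).exists_lift hsq hsurj (hker di)
      exact ⟨s, hs, fun _ h => ENat.natCast_inj.mp h ▸ hfin,
        fun h => absurd h (ENat.natCast_ne_top _)⟩
  choose s hθs hfin hinf using hlift
  refine ⟨s, hθs, linearIndependent_mk_range_comps_of_map hsq _ hbn ?_, hfin, hinf⟩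
  simpa only [hθs] using htindep

/-- if `t 0, …, t (m-1) ∈ H_0(K̃_b)` have linearly independent cosets
modulo `im ψ_{b-1}` and each `t i` has persistence interval `(b, dd i)` (with
`dd i ∈ {b+1, …, n} ∪ {∞}`), then there exist `s 0, …, s (m-1) ∈ H_0(K_b)` with
`θ_{0,b}(s i) = t i`, whose cosets modulo `im φ_{b-1}` are linearly independent, and
such that each `s i` has persistence interval `(b, dd i)` in `H_0(K_•)`.  (In
particular, the 0-th persistence barcode of `K̃_•` is contained as a multiset of
intervals in the 0-th persistence barcode of `K_•`.) -/
theorem stmt12 {α : Type} [DecidableEq α] (n k : ℕ)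
    (K Kt : ℕ → AbsSC α)
    (hK0 : (K 0).faces = ∅)
    (hKt0 : (Kt 0).faces = ∅)
    (hKmono : ∀ i, i < n → (K i).faces ⊆ (K (i + 1)).faces)
    (hKtmono : ∀ i, i < n → (Kt i).faces ⊆ (Kt (i + 1)).faces)
    (P : Fin k → Set α)
    (hPne : ∀ j, (P j).Nonempty)
    (hPdisj : Pairwise (Function.onFun Disjoint P))
    (hPunion : (⋃ j, P j) = (K 1).vertexSet)
    (z : Fin k → α)
    (hzinj : Function.Injective z)
    (hznew : ∀ (j : Fin k) (i : ℕ), i ≤ n → z j ∉ (K i).vertexSet)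
    (hKt : ∀ i, 1 ≤ i → i ≤ n → (Kt i).faces = (K i).faces ∪ starFaces P z)
    (φ : ∀ i : ℕ, (K i).Homology 0 →ₗ[ZMod 2] (K (i + 1)).Homology 0)
    (ψ : ∀ i : ℕ, (Kt i).Homology 0 →ₗ[ZMod 2] (Kt (i + 1)).Homology 0)
    (θ : ∀ i : ℕ, (K i).Homology 0 →ₗ[ZMod 2] (Kt i).Homology 0)
    (hφ : ∀ i, i < n → AbsSC.InducedHom (K i) (K (i + 1)) 0 (φ i))
    (hψ : ∀ i, i < n → AbsSC.InducedHom (Kt i) (Kt (i + 1)) 0 (ψ i))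
    (hθ : ∀ i, i ≤ n → AbsSC.InducedHom (K i) (Kt i) 0 (θ i))
    (hsq : ∀ i, i < n → (θ (i + 1)).comp (φ i) = (ψ i).comp (θ i))
    (b : ℕ) (hb1 : 1 ≤ b) (hbn : b ≤ n)
    (m : ℕ)
    (t : Fin m → (Kt b).Homology 0)
    (dd : Fin m → ℕ∞)
    (hdd : ∀ i, dd i = ⊤ ∨ ∃ di : ℕ, dd i = (di : ℕ∞) ∧ b < di ∧ di ≤ n)
    (htindep : LinearIndependent (ZMod 2)
      (fun i : Fin m =>
        Submodule.Quotient.mk (p := LinearMap.range (comps ψ (Nat.sub_le b 1))) (t i)))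
    (htfin : ∀ (i : Fin m) (di : ℕ), dd i = (di : ℕ∞) → HasPersIntervalFin ψ n b di (t i))
    (htinf : ∀ i : Fin m, dd i = ⊤ → HasPersIntervalInf ψ n b (t i)) :
    ∃ s : Fin m → (K b).Homology 0,
      (∀ i, θ b (s i) = t i) ∧
      LinearIndependent (ZMod 2)
        (fun i : Fin m =>
          Submodule.Quotient.mk (p := LinearMap.range (comps φ (Nat.sub_le b 1))) (s i)) ∧
      (∀ (i : Fin m) (di : ℕ), dd i = (di : ℕ∞) → HasPersIntervalFin φ n b di (s i)) ∧
      (∀ i : Fin m, dd i = ⊤ → HasPersIntervalInf φ n b (s i)) :=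
  stmt12_general n k K Kt hKt0 P hPne hPunion z hznew hKt φ ψ θ hφ hθ hsq b hb1 hbn m t dd htindep
    htfin htinf
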